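/- arXiv:2509.17699 — 2 statements merged into one kernel-verified Lean document; each statement's English description precedes it below -/
import Mathlib

section
/- The pair (r, r+1) with r = 3²·5²·7⁵·11³·59·71²·101·127·173²·197·199 and r+1 = 2¹⁰·13·17²·23·37²·41·47·61·79·107²·113²·137 is a 199-smooth twin; that is, the second product equals the first product plus one, and every prime factor appearing is at most 199. -/
namespace Nat

lemma pow_mem_smoothNumbers_of_lt {p n : ℕ} (hp : 0 < p) (hpn : p < n) (k : ℕ) :
    p ^ k ∈ smoothNumbers n :=
  mem_smoothNumbers'.2 fun _ hq hdvd ↦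
    ((le_of_dvd hp (hq.dvd_of_dvd_pow hdvd)).trans_lt hpn)

end Nat

/-- The explicit 95-bit 199-smooth twin: the two products are consecutive integers and their
product has all prime factors at most `199`. -/
theorem stmt_8 :
    (2 ^ 10 * 13 * 17 ^ 2 * 23 * 37 ^ 2 * 41 * 47 * 61 * 79 * 107 ^ 2 * 113 ^ 2 * 137 : ℕ) =
      3 ^ 2 * 5 ^ 2 * 7 ^ 5 * 11 ^ 3 * 59 * 71 ^ 2 * 101 * 127 * 173 ^ 2 * 197 * 199 + 1 ∧
    (∀ q : ℕ, q.Prime →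
      q ∣ (3 ^ 2 * 5 ^ 2 * 7 ^ 5 * 11 ^ 3 * 59 * 71 ^ 2 * 101 * 127 * 173 ^ 2 * 197 * 199) *
          (2 ^ 10 * 13 * 17 ^ 2 * 23 * 37 ^ 2 * 41 * 47 * 61 * 79 * 107 ^ 2 * 113 ^ 2 * 137) →
      q ≤ 199) := by
  refine ⟨by norm_num, fun q hq hdvd ↦ Nat.lt_succ_iff.mp ?_⟩
  refine Nat.mem_smoothNumbers'.1 ?_ q hq hdvd
  repeat' apply Nat.mul_mem_smoothNumbers
  all_goals first
    | exact Nat.pow_mem_smoothNumbers_of_lt (by norm_num) (by norm_num) _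
    | exact Nat.mem_smoothNumbers_of_lt (by norm_num) (by norm_num)
end

section
/- Let r = 7⁷·11·17·29·47·59·67·83²·89·151³·163·173·271·347·461·491·547·587·619·661·683·701. Then r + 1 = 2·3⁹·13²·19·31·41·71·73·97·157²·181³·191·227·241·293·307³·337·557·617·727·751. In particular (r, r+1) is a 751-smooth twin with 2¹⁹⁵ < r < 2¹⁹⁶. -/
/-- Auxiliary: all prime factors of `n` are at most 751. -/
def Sm751 (n : ℕ) : Prop := ∀ q : ℕ, q.Prime → q ∣ n → q ≤ 751

lemma sm751_mul {a b : ℕ} (ha : Sm751 a) (hb : Sm751 b) : Sm751 (a * b) :=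
  fun q hq hd => ((hq.dvd_mul).mp hd).elim (ha q hq) (hb q hq)

lemma sm751_pow {p : ℕ} (k : ℕ) (hp : p.Prime) (hle : p ≤ 751) : Sm751 (p ^ k) :=
  fun q hq hd => le_trans ((Nat.prime_dvd_prime_iff_eq hq hp).mp (hq.dvd_of_dvd_pow hd)).le hle

lemma sm751_p {p : ℕ} (hp : p.Prime) (hle : p ≤ 751) : Sm751 p :=
  fun q hq hd => le_trans ((Nat.prime_dvd_prime_iff_eq hq hp).mp hd).le hle

/-- The explicit 196-bit 751-smooth twin. -/
theorem stmt_9 :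
    let r : ℕ := 7 ^ 7 * 11 * 17 * 29 * 47 * 59 * 67 * 83 ^ 2 * 89 * 151 ^ 3 * 163 * 173 *
      271 * 347 * 461 * 491 * 547 * 587 * 619 * 661 * 683 * 701
    r + 1 = 2 * 3 ^ 9 * 13 ^ 2 * 19 * 31 * 41 * 71 * 73 * 97 * 157 ^ 2 * 181 ^ 3 * 191 * 227 *
      241 * 293 * 307 ^ 3 * 337 * 557 * 617 * 727 * 751 ∧
    (∀ q : ℕ, q.Prime → q ∣ r * (r + 1) → q ≤ 751) ∧
    2 ^ 195 < r ∧ r < 2 ^ 196 := by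
  intro r
  have heq : r + 1 = 2 * 3 ^ 9 * 13 ^ 2 * 19 * 31 * 41 * 71 * 73 * 97 * 157 ^ 2 * 181 ^ 3 *
      191 * 227 * 241 * 293 * 307 ^ 3 * 337 * 557 * 617 * 727 * 751 := by norm_num [r]
  refine ⟨heq, ?_, by norm_num [r], by norm_num [r]⟩
  have key : Sm751 ((7 ^ 7 * 11 * 17 * 29 * 47 * 59 * 67 * 83 ^ 2 * 89 * 151 ^ 3 * 163 * 173 *
      271 * 347 * 461 * 491 * 547 * 587 * 619 * 661 * 683 * 701 : ℕ) *
      (2 * 3 ^ 9 * 13 ^ 2 * 19 * 31 * 41 * 71 * 73 * 97 * 157 ^ 2 * 181 ^ 3 * 191 * 227 *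
      241 * 293 * 307 ^ 3 * 337 * 557 * 617 * 727 * 751)) := by
    repeat' apply sm751_mul
    all_goals first
      | exact sm751_pow _ (by norm_num) (by norm_num)
      | exact sm751_p (by norm_num) (by norm_num)
  intro q hq h
  rw [heq] at h
  exact key q hq h
end
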